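/- arXiv:2405.03843 — 5 statements merged into one kernel-verified Lean document; each statement's English description precedes it below -/
import Mathlib

section
/- Product decomposition of the A-Euler characteristic: if A = A₁ × A₂, then for any finite G-set X, χ^{(A)}(X,G) = Σ_{[φ] ∈ Hom(A₁,G)/G} χ^{(A₂)}(X^{φ(A₁)}, C_G(φ(A₁))), where G acts on Hom(A₁,G) by conjugation, φ is a representative of the class [φ], X^{φ(A₁)} is the fixed-point set of the image of φ (a C_G(φ(A₁))-set), and C_G(φ(A₁)) is the centralizer of the image of φ. -/
open scoped BigOperators

/-- The `A`-Euler characteristic of a `G`-set `X`: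
`χ^{(A)}(X,G) = (1/|G|) · Σ_{φ ∈ Hom(A,G)} |X^{φ(A)}|`. -/
noncomputable def chiA (A G X : Type*) [Group A] [Group G] [MulAction G X] : ℚ :=
  (Nat.card G : ℚ)⁻¹ * ∑ᶠ φ : A →* G, (Nat.card {x : X // ∀ a : A, φ a • x = x} : ℚ)

/-- The action of `G` on `Hom(A₁, G)` by conjugation: `(g·φ)(a) = g φ(a) g⁻¹`. -/
instance conjHomAction (A₁ G : Type*) [Group A₁] [Group G] : MulAction G (A₁ →* G) where
  smul g φ := (MulAut.conj g).toMonoidHom.comp φ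
  one_smul φ := by
    ext a
    show (MulAut.conj (1 : G)) (φ a) = φ a
    simp
  mul_smul g h φ := by
    ext a
    show (MulAut.conj (g * h)) (φ a) = (MulAut.conj g) ((MulAut.conj h) (φ a))
    simp [mul_assoc]

/-- The centralizer of the image of `φ : A₁ →* G` acts on the fixed-point set `X^{φ(A₁)}`. -/
instance centralizerFixedAction (A₁ G X : Type*) [Group A₁] [Group G] [MulAction G X]
    (φ : A₁ →* G) :
    MulAction ↥(Subgroup.centralizer (Set.range φ)) {x : X // ∀ a : A₁, φ a • x = x} where
  smul c x := ⟨(c : G) • (x : X), fun a => by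
    have hc : φ a * (c : G) = (c : G) * φ a :=
      Subgroup.mem_centralizer_iff.mp c.2 (φ a) ⟨a, rfl⟩
    rw [← mul_smul, hc, mul_smul, x.2 a]⟩
  one_smul x := Subtype.ext (one_smul G (x : X))
  mul_smul c d x := Subtype.ext (by
    show ((c * d : Subgroup.centralizer (Set.range φ)) : G) • (x : X)
        = (c : G) • ((d : G) • (x : X))
    rw [Subgroup.coe_mul, mul_smul])

/-! ### Auxiliary material -/

instance finiteMonoidHom (A H : Type*) [Group A] [Group.FG A] [Group H] [Finite H] :
    Finite (A →* H) := by
  obtain ⟨S, hS, hfin⟩ := Group.fg_iff.mp ‹Group.FG A›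
  haveI := hfin.to_subtype
  apply Finite.of_injective (fun φ : A →* H => (fun s : S => φ s))
  intro φ ψ h
  exact MonoidHom.eq_of_eqOn_dense hS fun x hx => congrFun h ⟨x, hx⟩

lemma conj_smul_apply {A₁ G : Type*} [Group A₁] [Group G] (g : G) (φ : A₁ →* G) (a : A₁) :
    (g • φ) a = g * φ a * g⁻¹ := rfl

lemma stabilizer_eq_centralizer {A₁ G : Type*} [Group A₁] [Group G] (φ : A₁ →* G) :
    MulAction.stabilizer G φ = Subgroup.centralizer (Set.range ⇑φ) := by
  ext g
  rw [MulAction.mem_stabilizer_iff, Subgroup.mem_centralizer_iff]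
  constructor
  · rintro h _ ⟨a, rfl⟩
    have := DFunLike.congr_fun h a
    rw [conj_smul_apply] at this
    conv_lhs => rw [← this]
    group
  · intro h
    ext a
    have h2 := h (φ a) ⟨a, rfl⟩
    rw [conj_smul_apply, ← h2]
    group

section
variable {A₁ A₂ G X : Type*} [Group A₁] [Group A₂] [Group G] [MulAction G X]

/-- Homs into the centralizer vs homs with commuting range. -/
def homToCentEquiv (φ : A₁ →* G) :
    (A₂ →* ↥(Subgroup.centralizer (Set.range ⇑φ))) ≃
      {ψ : A₂ →* G // ∀ m n, Commute (φ m) (ψ n)} where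
  toFun ψ := ⟨(Subgroup.centralizer (Set.range ⇑φ)).subtype.comp ψ, fun m n =>
    Subgroup.mem_centralizer_iff.mp (ψ n).2 (φ m) ⟨m, rfl⟩⟩
  invFun ψ := (ψ.1).codRestrict _ (fun n => Subgroup.mem_centralizer_iff.mpr
    (by rintro _ ⟨m, rfl⟩; exact ψ.2 m n))
  left_inv ψ := by ext a; rfl
  right_inv ψ := by ext a; rfl

/-- Decomposition of a hom from a product. -/
def homProdEquiv :
    (A₁ × A₂ →* G) ≃ Σ φ₁ : A₁ →* G, (A₂ →* ↥(Subgroup.centralizer (Set.range ⇑φ₁))) :=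
  ({ toFun := fun φ => ⟨(φ.comp (MonoidHom.inl A₁ A₂), φ.comp (MonoidHom.inr A₁ A₂)),
        fun m n => (MonoidHom.commute_inl_inr m n).map φ⟩
     invFun := fun p => p.1.1.noncommCoprod p.1.2 p.2
     left_inv := fun φ => MonoidHom.noncommCoprod_unique φ
     right_inv := fun p => Subtype.ext (Prod.ext
        (MonoidHom.noncommCoprod_comp_inl _ _ _) (MonoidHom.noncommCoprod_comp_inr _ _ _)) } :
    (A₁ × A₂ →* G) ≃ {p : (A₁ →* G) × (A₂ →* G) // ∀ m n, Commute (p.1 m) (p.2 n)}).trans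
  ((Equiv.subtypeProdEquivSigmaSubtype _).trans
    (Equiv.sigmaCongrRight fun φ₁ => (homToCentEquiv φ₁).symm))

lemma homProdEquiv_symm_apply (φ₁ : A₁ →* G)
    (ψ : A₂ →* ↥(Subgroup.centralizer (Set.range ⇑φ₁))) (p : A₁ × A₂) :
    (homProdEquiv.symm ⟨φ₁, ψ⟩ : A₁ × A₂ →* G) p = φ₁ p.1 * (ψ p.2 : G) := rfl

/-- Fixed points of a product hom decompose. -/
def fixProdEquiv (φ₁ : A₁ →* G) (ψ : A₂ →* ↥(Subgroup.centralizer (Set.range ⇑φ₁)))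
    (φ : A₁ × A₂ →* G) (hφ : ∀ p : A₁ × A₂, φ p = φ₁ p.1 * (ψ p.2 : G)) :
    {x : X // ∀ p : A₁ × A₂, φ p • x = x} ≃
      {x' : {x : X // ∀ a : A₁, φ₁ a • x = x} // ∀ b : A₂, ψ b • x' = x'} where
  toFun x := ⟨⟨(x : X), fun a => by
      have h := x.2 (a, 1)
      rwa [hφ, map_one, Subgroup.coe_one, mul_one] at h⟩,
    fun b => Subtype.ext (by
      have h := x.2 (1, b)
      rw [hφ, map_one, one_mul] at h
      exact h)⟩
  invFun y := ⟨(y : {x : X // ∀ a : A₁, φ₁ a • x = x}), fun p => by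
      have h2 : (ψ p.2 : G) • ((y : {x : X // ∀ a : A₁, φ₁ a • x = x}) : X)
          = ((y : {x : X // ∀ a : A₁, φ₁ a • x = x}) : X) :=
        congrArg Subtype.val (y.2 p.2)
      rw [hφ, mul_smul, h2, (y : {x : X // ∀ a : A₁, φ₁ a • x = x}).2 p.1]⟩
  left_inv x := rfl
  right_inv y := rfl

/-- Conjugation gives an isomorphism of centralizers. -/
def centConjEquiv (g : G) (φ : A₁ →* G) :
    ↥(Subgroup.centralizer (Set.range ⇑φ)) ≃* ↥(Subgroup.centralizer (Set.range ⇑(g • φ))) where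
  toFun c := ⟨g * (c : G) * g⁻¹, by
    rw [Subgroup.mem_centralizer_iff]
    rintro _ ⟨a, rfl⟩
    have hc : φ a * (c : G) = (c : G) * φ a :=
      Subgroup.mem_centralizer_iff.mp c.2 (φ a) ⟨a, rfl⟩
    rw [conj_smul_apply]
    calc g * φ a * g⁻¹ * (g * ↑c * g⁻¹) = g * (φ a * ↑c) * g⁻¹ := by group
      _ = g * (↑c * φ a) * g⁻¹ := by rw [hc]
      _ = g * ↑c * g⁻¹ * (g * φ a * g⁻¹) := by group⟩
  invFun c := ⟨g⁻¹ * (c : G) * g, by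
    rw [Subgroup.mem_centralizer_iff]
    rintro _ ⟨a, rfl⟩
    have hc : (g • φ) a * (c : G) = (c : G) * (g • φ) a :=
      Subgroup.mem_centralizer_iff.mp c.2 ((g • φ) a) ⟨a, rfl⟩
    rw [conj_smul_apply] at hc
    calc φ a * (g⁻¹ * ↑c * g) = g⁻¹ * (g * φ a * g⁻¹ * ↑c) * g := by group
      _ = g⁻¹ * (↑c * (g * φ a * g⁻¹)) * g := by rw [hc]
      _ = g⁻¹ * ↑c * g * φ a := by group⟩
  left_inv c := Subtype.ext (by simp [mul_assoc])
  right_inv c := Subtype.ext (by simp [mul_assoc])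
  map_mul' c d := Subtype.ext (by
    show g * (↑c * ↑d) * g⁻¹ = (g * ↑c * g⁻¹) * (g * ↑d * g⁻¹)
    group)

/-- Conjugating the whole picture gives an equivalence of doubly-fixed sets. -/
def fixConjEquiv (g : G) (φ : A₁ →* G)
    (ψ : A₂ →* ↥(Subgroup.centralizer (Set.range ⇑φ))) :
    {x' : {x : X // ∀ a : A₁, φ a • x = x} // ∀ b : A₂, ψ b • x' = x'} ≃
      {x' : {x : X // ∀ a : A₁, (g • φ) a • x = x} //
        ∀ b : A₂, ((centConjEquiv g φ).toMonoidHom.comp ψ) b • x' = x'} where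
  toFun y := ⟨⟨g • ((y : {x : X // ∀ a : A₁, φ a • x = x}) : X), fun a => by
      rw [conj_smul_apply, mul_smul, mul_smul, inv_smul_smul,
        (y : {x : X // ∀ a : A₁, φ a • x = x}).2 a]⟩,
    fun b => Subtype.ext (by
      have h2 : (ψ b : G) • ((y : {x : X // ∀ a : A₁, φ a • x = x}) : X)
          = ((y : {x : X // ∀ a : A₁, φ a • x = x}) : X) := congrArg Subtype.val (y.2 b)
      show (g * (ψ b : G) * g⁻¹) • (g • _) = g • _
      rw [mul_smul, mul_smul, inv_smul_smul, h2])⟩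
  invFun y := ⟨⟨g⁻¹ • ((y : {x : X // ∀ a : A₁, (g • φ) a • x = x}) : X), fun a => by
      have h := (y : {x : X // ∀ a : A₁, (g • φ) a • x = x}).2 a
      rw [conj_smul_apply, mul_smul, mul_smul] at h
      conv_rhs => rw [← h]
      rw [inv_smul_smul]⟩,
    fun b => Subtype.ext (by
      have h2 : (g * (ψ b : G) * g⁻¹) • ((y : {x : X // ∀ a : A₁, (g • φ) a • x = x}) : X)
          = ((y : {x : X // ∀ a : A₁, (g • φ) a • x = x}) : X) := congrArg Subtype.val (y.2 b)
      show (ψ b : G) • (g⁻¹ • _) = g⁻¹ • _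
      rw [mul_smul, mul_smul] at h2
      conv_rhs => rw [← h2]
      rw [inv_smul_smul])⟩
  left_inv y := Subtype.ext (Subtype.ext (inv_smul_smul g _))
  right_inv y := Subtype.ext (Subtype.ext (smul_inv_smul g _))

/-- Composition with the conjugation isomorphism of centralizers, as an equivalence of
hom sets. -/
def homCentConjEquiv (g : G) (φ : A₁ →* G) :
    (A₂ →* ↥(Subgroup.centralizer (Set.range ⇑φ))) ≃
      (A₂ →* ↥(Subgroup.centralizer (Set.range ⇑(g • φ)))) where
  toFun ψ := (centConjEquiv g φ).toMonoidHom.comp ψ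
  invFun ψ := (centConjEquiv g φ).symm.toMonoidHom.comp ψ
  left_inv ψ := by ext a; simp
  right_inv ψ := by ext a; simp

end

/-- `|H| * χ^{(B)}(Y,H) = Σ_{ψ : B →* H} |Y^{ψ(B)}|`. -/
lemma card_mul_chiA (B H Y : Type*) [Group B] [Group H] [Finite H] [MulAction H Y] :
    (Nat.card H : ℚ) * chiA B H Y =
      ∑ᶠ ψ : B →* H, (Nat.card {y : Y // ∀ b : B, ψ b • y = y} : ℚ) := by
  rw [chiA, ← mul_assoc, mul_inv_cancel₀ (Nat.cast_ne_zero.mpr Nat.card_pos.ne'), one_mul]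

section
variable {A₁ A₂ G X : Type*} [Group A₁] [Group A₂] [Group.FG A₂] [Group G] [Finite G]
  [MulAction G X] [Finite X]

/-- The function `φ ↦ |C_G(φ(A₁))| * χ^{(A₂)}(X^{φ(A₁)}, C_G(φ(A₁)))` is conjugation-invariant. -/
lemma F_conj (g : G) (φ : A₁ →* G) :
    (Nat.card ↥(Subgroup.centralizer (Set.range ⇑(g • φ))) : ℚ) *
      chiA A₂ ↥(Subgroup.centralizer (Set.range ⇑(g • φ)))
        {x : X // ∀ a : A₁, (g • φ) a • x = x} =
    (Nat.card ↥(Subgroup.centralizer (Set.range ⇑φ)) : ℚ) *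
      chiA A₂ ↥(Subgroup.centralizer (Set.range ⇑φ)) {x : X // ∀ a : A₁, φ a • x = x} := by
  classical
  rw [card_mul_chiA, card_mul_chiA]
  letI : Fintype (A₂ →* ↥(Subgroup.centralizer (Set.range ⇑φ))) := Fintype.ofFinite _
  letI : Fintype (A₂ →* ↥(Subgroup.centralizer (Set.range ⇑(g • φ)))) := Fintype.ofFinite _
  rw [finsum_eq_sum_of_fintype, finsum_eq_sum_of_fintype]
  exact (Fintype.sum_equiv (homCentConjEquiv g φ) _ _ fun ψ =>
    congrArg (Nat.cast : ℕ → ℚ) (Nat.card_congr (fixConjEquiv g φ ψ))).symm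

end

/-- Summing a conjugation-invariant function over a finite `G`-set. -/
lemma sum_const_on_orbits {G Y : Type*} [Group G] [Finite G] [MulAction G Y] [Fintype Y]
    (F : Y → ℚ) (hF : ∀ (g : G) (y : Y), F (g • y) = F y) :
    ∑ y : Y, F y =
      ∑ᶠ q : Quotient (MulAction.orbitRel G Y),
        (Nat.card (MulAction.orbit G (Quotient.out q)) : ℚ) * F (Quotient.out q) := by
  classical
  letI : Fintype (Quotient (MulAction.orbitRel G Y)) := Fintype.ofFinite _
  rw [finsum_eq_sum_of_fintype]
  have h1 : ∀ y : Y, F y = F (Quotient.out (Quotient.mk (MulAction.orbitRel G Y) y)) := by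
    intro y
    have hrel : MulAction.orbitRel G Y
        (Quotient.out (Quotient.mk (MulAction.orbitRel G Y) y)) y :=
      Quotient.exact (Quotient.out_eq _)
    obtain ⟨g, hg⟩ := MulAction.mem_orbit_iff.mp (MulAction.orbitRel_apply.mp hrel)
    rw [← hg, hF]
  calc ∑ y : Y, F y
      = ∑ y : Y, F (Quotient.out (Quotient.mk (MulAction.orbitRel G Y) y)) :=
        Finset.sum_congr rfl fun y _ => h1 y
    _ = ∑ σ : Σ q : Quotient (MulAction.orbitRel G Y),
          {y : Y // Quotient.mk (MulAction.orbitRel G Y) y = q},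
          F (Quotient.out (Quotient.mk (MulAction.orbitRel G Y) σ.2.1)) :=
        (Fintype.sum_equiv (Equiv.sigmaFiberEquiv _) _ _ fun σ => rfl).symm
    _ = ∑ q : Quotient (MulAction.orbitRel G Y),
          ∑ y : {y : Y // Quotient.mk (MulAction.orbitRel G Y) y = q},
          F (Quotient.out (Quotient.mk (MulAction.orbitRel G Y) y.1)) := by
        rw [← Finset.univ_sigma_univ, Finset.sum_sigma]
    _ = ∑ q : Quotient (MulAction.orbitRel G Y),
          (Nat.card (MulAction.orbit G (Quotient.out q)) : ℚ) * F (Quotient.out q) := by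
        refine Finset.sum_congr rfl fun q _ => ?_
        have hfib : ∀ y : Y,
            (Quotient.mk (MulAction.orbitRel G Y) y = q) ↔
              y ∈ MulAction.orbit G (Quotient.out q) := fun y =>
          ⟨fun h => MulAction.orbitRel_apply.mp
              (Quotient.exact (h.trans (Quotient.out_eq q).symm)),
            fun h => (Quotient.sound (MulAction.orbitRel_apply.mpr h)).trans (Quotient.out_eq q)⟩
        calc ∑ y : {y : Y // Quotient.mk (MulAction.orbitRel G Y) y = q},
              F (Quotient.out (Quotient.mk (MulAction.orbitRel G Y) y.1))
            = ∑ _y : {y : Y // Quotient.mk (MulAction.orbitRel G Y) y = q},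
              F (Quotient.out q) :=
              Finset.sum_congr rfl fun y _ => by rw [y.2]
          _ = (Fintype.card {y : Y // Quotient.mk (MulAction.orbitRel G Y) y = q} : ℚ) *
              F (Quotient.out q) := by
              rw [Finset.sum_const, Finset.card_univ, nsmul_eq_mul]
          _ = (Nat.card (MulAction.orbit G (Quotient.out q)) : ℚ) * F (Quotient.out q) := by
              rw [← Nat.card_eq_fintype_card,
                Nat.card_congr (Equiv.subtypeEquivRight hfib)]

/-- Orbit-stabilizer for the conjugation action on homs. -/
lemma orbit_card_mul_cent_card {A₁ G : Type*} [Group A₁] [Group G] [Finite G] (φ : A₁ →* G) :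
    (Nat.card (MulAction.orbit G φ) : ℚ) *
      (Nat.card ↥(Subgroup.centralizer (Set.range ⇑φ)) : ℚ) = (Nat.card G : ℚ) := by
  classical
  rw [← stabilizer_eq_centralizer]
  letI : Fintype G := Fintype.ofFinite G
  haveI : Finite ↥(MulAction.orbit G φ) := (Set.finite_range fun g : G => g • φ).to_subtype
  letI : Fintype (MulAction.orbit G φ) := Fintype.ofFinite _
  letI : Fintype (MulAction.stabilizer G φ) := Fintype.ofFinite _
  rw [Nat.card_eq_fintype_card, Nat.card_eq_fintype_card, Nat.card_eq_fintype_card]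
  exact_mod_cast congrArg (Nat.cast : ℕ → ℚ)
    (MulAction.card_orbit_mul_card_stabilizer_eq_card_group G φ)

/-- Product decomposition of the `A`-Euler characteristic: for `A = A₁ × A₂`,
`χ^{(A)}(X,G) = Σ_{[φ] ∈ Hom(A₁,G)/G} χ^{(A₂)}(X^{φ(A₁)}, C_G(φ(A₁)))`. -/
theorem chiA_prod_decomposition (A₁ A₂ G X : Type*) [Group A₁] [Group.FG A₁]
    [Group A₂] [Group.FG A₂] [Group G] [Finite G] [MulAction G X] [Finite X] :
    chiA (A₁ × A₂) G X =
      ∑ᶠ q : Quotient (MulAction.orbitRel G (A₁ →* G)),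
        @chiA A₂ ↥(Subgroup.centralizer (Set.range ⇑(Quotient.out q)))
          {x : X // ∀ a : A₁, (Quotient.out q) a • x = x} _ _
          (centralizerFixedAction A₁ G X (Quotient.out q)) := by
  classical
  haveI : Finite (A₁ × A₂ →* G) :=
    Finite.of_equiv _ (homProdEquiv (A₁ := A₁) (A₂ := A₂) (G := G)).symm
  letI : Fintype (A₁ →* G) := Fintype.ofFinite _
  letI : Fintype (A₁ × A₂ →* G) := Fintype.ofFinite _
  letI : ∀ φ₁ : A₁ →* G, Fintype (A₂ →* ↥(Subgroup.centralizer (Set.range ⇑φ₁))) :=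
    fun _ => Fintype.ofFinite _
  letI : Fintype (Quotient (MulAction.orbitRel G (A₁ →* G))) := Fintype.ofFinite _
  set F : (A₁ →* G) → ℚ := fun φ₁ =>
    (Nat.card ↥(Subgroup.centralizer (Set.range ⇑φ₁)) : ℚ) *
      chiA A₂ ↥(Subgroup.centralizer (Set.range ⇑φ₁)) {x : X // ∀ a : A₁, φ₁ a • x = x}
    with hFdef
  have hstep1 : chiA (A₁ × A₂) G X = (Nat.card G : ℚ)⁻¹ * ∑ φ₁ : A₁ →* G, F φ₁ := by
    rw [chiA, finsum_eq_sum_of_fintype]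
    congr 1
    calc ∑ φ : A₁ × A₂ →* G, (Nat.card {x : X // ∀ p : A₁ × A₂, φ p • x = x} : ℚ)
        = ∑ σ : Σ φ₁ : A₁ →* G, (A₂ →* ↥(Subgroup.centralizer (Set.range ⇑φ₁))),
            (Nat.card {x : X // ∀ p : A₁ × A₂, (homProdEquiv.symm σ) p • x = x} : ℚ) :=
          Fintype.sum_equiv homProdEquiv _ _ fun φ => by rw [Equiv.symm_apply_apply]
      _ = ∑ φ₁ : A₁ →* G, ∑ ψ : A₂ →* ↥(Subgroup.centralizer (Set.range ⇑φ₁)),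
            (Nat.card {x : X // ∀ p : A₁ × A₂, (homProdEquiv.symm ⟨φ₁, ψ⟩) p • x = x} : ℚ) := by
          rw [← Finset.univ_sigma_univ, Finset.sum_sigma]
      _ = ∑ φ₁ : A₁ →* G, F φ₁ := by
          refine Finset.sum_congr rfl fun φ₁ _ => ?_
          simp only [hFdef]
          rw [card_mul_chiA, finsum_eq_sum_of_fintype]
          refine Finset.sum_congr rfl fun ψ _ => ?_
          exact congrArg (Nat.cast : ℕ → ℚ)
            (Nat.card_congr (fixProdEquiv φ₁ ψ _ fun p => rfl))
  have hF : ∀ (g : G) (y : A₁ →* G), F (g • y) = F y := fun g y => F_conj (X := X) g y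
  rw [hstep1, sum_const_on_orbits F hF, finsum_eq_sum_of_fintype, finsum_eq_sum_of_fintype,
    Finset.mul_sum]
  have hG : (Nat.card G : ℚ) ≠ 0 := Nat.cast_ne_zero.mpr Nat.card_pos.ne'
  refine Finset.sum_congr rfl fun q _ => ?_
  simp only [hFdef]
  rw [← mul_assoc, ← mul_assoc, mul_assoc ((Nat.card G : ℚ))⁻¹,
    orbit_card_mul_cent_card, inv_mul_cancel₀ hG, one_mul]
end

section
/- For finite groups K ⊆ H and a finitely generated group A, one has (1/|H|) Σ_{φ ∈ Hom(A,H)} |(H/K)^{φ(A)}| = |Hom(A,K)|/|K|, where H acts on the left coset space H/K. Equivalently, χ^{(A)}(H/K, H) = χ^{(A)}(K/K, K). -/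
open scoped BigOperators

lemma finite_homs (A H : Type*) [Group A] [Group.FG A] [Group H] [Finite H] :
    Finite (A →* H) := by
  obtain ⟨S, hS⟩ := Group.FG.out (G := A)
  have : Function.Injective (fun φ : A →* H => (fun s : S => φ s)) := by
    intro f g h
    exact MonoidHom.eq_of_eqOn_dense hS (fun a ha => congrFun h ⟨a, ha⟩)
  exact Finite.of_injective _ this

/-- Homs fixing the coset `↑g` biject with homs into `K`. -/
noncomputable def fiberEquiv {A H : Type*} [Group A] [Group H] (K : Subgroup H) (g : H) :
    {φ : A →* H // ∀ a : A, φ a • (↑g : H ⧸ K) = ↑g} ≃ (A →* K) where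
  toFun ψ := ((MulAut.conj g⁻¹).toMonoidHom.comp ψ.1).codRestrict K (by
    intro a
    have := ψ.2 a
    rw [show ψ.1 a • (↑g : H ⧸ K) = ↑(ψ.1 a * g) from rfl, QuotientGroup.eq] at this
    have h2 := inv_mem this
    simpa [MulAut.conj, mul_assoc] using h2)
  invFun χ := ⟨(MulAut.conj g).toMonoidHom.comp (K.subtype.comp χ), by
    intro a
    rw [show ((MulAut.conj g).toMonoidHom.comp (K.subtype.comp χ)) a • (↑g : H ⧸ K)
        = ↑(((MulAut.conj g).toMonoidHom.comp (K.subtype.comp χ)) a * g) from rfl,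
      QuotientGroup.eq]
    simp [MulAut.conj, mul_assoc]⟩
  left_inv ψ := by
    ext a
    simp [MulAut.conj, mul_assoc]
  right_inv χ := by
    ext a
    simp [MulAut.conj, mul_assoc]

/-- For finite groups `K ⊆ H` and a finitely generated group `A`:
`(1/|H|) Σ_{φ ∈ Hom(A,H)} |(H/K)^{φ(A)}| = |Hom(A,K)|/|K|`,
i.e. `χ^{(A)}(H/K, H) = χ^{(A)}(K/K, K)`. -/
theorem chiA_coset_space (A H : Type*) [Group A] [Group.FG A] [Group H] [Finite H]
    (K : Subgroup H) :
    chiA A H (H ⧸ K) = (Nat.card (A →* K) : ℚ) / (Nat.card K : ℚ) := by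
  classical
  have : Finite (A →* H) := finite_homs A H
  letI : Fintype (A →* H) := Fintype.ofFinite _
  letI : Fintype (H ⧸ K) := Fintype.ofFinite _
  have hK : (Nat.card K : ℚ) ≠ 0 := Nat.cast_ne_zero.2 Nat.card_pos.ne'
  have hH : (Nat.card H : ℚ) ≠ 0 := Nat.cast_ne_zero.2 Nat.card_pos.ne'
  -- double counting
  have swap : ∑ φ : A →* H, Nat.card {x : H ⧸ K // ∀ a : A, φ a • x = x}
      = ∑ x : H ⧸ K, Nat.card {φ : A →* H // ∀ a : A, φ a • x = x} := by
    simp only [Nat.card_eq_fintype_card, Fintype.card_subtype, Finset.card_filter]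
    exact Finset.sum_comm
  have key : ∀ x : H ⧸ K,
      Nat.card {φ : A →* H // ∀ a : A, φ a • x = x} = Nat.card (A →* K) := by
    intro x
    induction x using QuotientGroup.induction_on with
    | H g => exact Nat.card_congr (fiberEquiv K g)
  have hsum : ∑ x : H ⧸ K, Nat.card {φ : A →* H // ∀ a : A, φ a • x = x}
      = Nat.card (H ⧸ K) * Nat.card (A →* K) := by
    rw [Finset.sum_congr rfl (fun x _ => key x), Finset.sum_const, Finset.card_univ,
      smul_eq_mul]
    congr 1
    exact Nat.card_eq_fintype_card.symm
  have hHK : Nat.card H = Nat.card (H ⧸ K) * Nat.card K :=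
    Subgroup.card_eq_card_quotient_mul_card_subgroup K
  have hQ : (Nat.card (H ⧸ K) : ℚ) ≠ 0 := Nat.cast_ne_zero.2 Nat.card_pos.ne'
  rw [chiA, finsum_eq_sum_of_fintype, ← Nat.cast_sum, swap, hsum, hHK]
  push_cast
  field_simp
end

section
/- Double counting identity: for finite groups K ⊆ H and a finitely generated group A, Σ_{φ ∈ Hom(A,H)} |(H/K)^{φ(A)}| = [H:K] · |Hom(A,K)|. -/
open scoped BigOperators

private lemma finite_monoidHom {A H : Type*} [Group A] [Group.FG A] [Monoid H] [Finite H] :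
    Finite (A →* H) := by
  obtain ⟨S, hS, hfin⟩ := Group.fg_iff.mp ‹Group.FG A›
  haveI := hfin.to_subtype
  apply Finite.of_injective (fun φ : A →* H => (S.restrict φ))
  intro f g h
  exact MonoidHom.eq_of_eqOn_dense hS (fun x hx => congrFun h ⟨x, hx⟩)

/-- homs into a subgroup vs homs landing in the subgroup -/
private def homCodRestrictEquiv {A H : Type*} [Group A] [Group H] (L : Subgroup H) :
    {φ : A →* H // ∀ a, φ a ∈ L} ≃ (A →* L) where
  toFun φ := (φ.1).codRestrict L φ.2
  invFun ψ := ⟨L.subtype.comp ψ, fun a => (ψ a).2⟩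
  left_inv φ := by ext a; rfl
  right_inv ψ := by ext a; rfl

private def homCongrEquiv {A K L : Type*} [Group A] [Group K] [Group L] (e : K ≃* L) :
    (A →* K) ≃ (A →* L) where
  toFun φ := e.toMonoidHom.comp φ
  invFun ψ := e.symm.toMonoidHom.comp ψ
  left_inv φ := by ext a; simp
  right_inv ψ := by ext a; simp

/-- Double counting identity: for finite groups `K ⊆ H` and a finitely generated group `A`,
`Σ_{φ ∈ Hom(A,H)} |(H/K)^{φ(A)}| = [H:K] · |Hom(A,K)|`. -/
theorem sum_card_fixed_cosets (A H : Type*) [Group A] [Group.FG A] [Group H] [Finite H]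
    (K : Subgroup H) :
    ∑ᶠ φ : A →* H, Nat.card {x : H ⧸ K // ∀ a : A, φ a • x = x}
      = K.index * Nat.card (A →* K) := by
  classical
  haveI : Finite (A →* H) := finite_monoidHom
  haveI : Fintype (A →* H) := Fintype.ofFinite _
  haveI : Fintype (H ⧸ K) := Fintype.ofFinite _
  -- for each coset x, the set of φ fixing x is equinumerous with A →* K
  have key : ∀ x : H ⧸ K, Nat.card {φ : A →* H // ∀ a, φ a • x = x} = Nat.card (A →* K) := by
    intro x
    obtain ⟨g, rfl⟩ := QuotientGroup.mk_surjective x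
    have hstab : MulAction.stabilizer H ((g : H ⧸ K)) = K.map (MulAut.conj g).toMonoidHom := by
      have : ((g : H ⧸ K)) = g • ((1 : H) : H ⧸ K) := by
        simp
      rw [this, MulAction.stabilizer_smul_eq_stabilizer_map_conj,
        MulAction.stabilizer_quotient]
    have e1 : {φ : A →* H // ∀ a, φ a • ((g : H ⧸ K)) = (g : H ⧸ K)} ≃
        (A →* (K.map (MulAut.conj g).toMonoidHom)) := by
      refine (Equiv.subtypeEquivRight ?_).trans (homCodRestrictEquiv _)
      intro φ
      constructor
      · intro h a; rw [← hstab]; exact h a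
      · intro h a; have := h a; rw [← hstab] at this; exact this
    have e2 : (A →* (K.map (MulAut.conj g).toMonoidHom)) ≃ (A →* K) :=
      homCongrEquiv ((MulAut.conj g).subgroupMap K).symm
    rw [Nat.card_congr (e1.trans e2)]
  rw [finsum_eq_sum_of_fintype]
  have lhs : ∀ φ : A →* H, Nat.card {x : H ⧸ K // ∀ a : A, φ a • x = x}
      = ∑ x : H ⧸ K, if (∀ a : A, φ a • x = x) then 1 else 0 := by
    intro φ
    rw [Nat.card_eq_fintype_card, Fintype.card_subtype, Finset.card_filter]
  calc ∑ φ : A →* H, Nat.card {x : H ⧸ K // ∀ a : A, φ a • x = x}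
      = ∑ φ : A →* H, ∑ x : H ⧸ K, if (∀ a : A, φ a • x = x) then 1 else 0 := by
        simp_rw [lhs]
    _ = ∑ x : H ⧸ K, ∑ φ : A →* H, if (∀ a : A, φ a • x = x) then 1 else 0 :=
        Finset.sum_comm
    _ = ∑ x : H ⧸ K, Nat.card {φ : A →* H // ∀ a, φ a • x = x} := by
        refine Finset.sum_congr rfl fun x _ => ?_
        rw [Nat.card_eq_fintype_card, Fintype.card_subtype, Finset.card_filter]
    _ = ∑ x : H ⧸ K, Nat.card (A →* K) := by simp_rw [key]
    _ = K.index * Nat.card (A →* K) := by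
        haveI : Finite (A →* K) := finite_monoidHom
        haveI : Fintype (A →* K) := Fintype.ofFinite _
        rw [Finset.sum_const, Finset.card_univ, smul_eq_mul,
          Subgroup.index_eq_card, Nat.card_eq_fintype_card, Nat.card_eq_fintype_card]
end

section
/- Integrality for A containing a ℤ factor: if A = ℤ × A' for a finitely generated group A', then for any finite group G and finite G-set X, the A-Euler characteristic χ^{(A)}(X,G) = (1/|G|) Σ_{φ ∈ Hom(A,G)} |X^{φ(A)}| is an integer. -/
open scoped BigOperators

section Aux

variable (A' G X : Type*) [Group A'] [Group G] [MulAction G X]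

/-- Homs from a f.g. group to a finite group form a finite type. -/
lemma chiAux.finite_hom [Group.FG A'] [Finite G] : Finite (A' →* G) := by
  obtain ⟨S, hS, hfin⟩ := Group.fg_iff.mp ‹Group.FG A'›
  haveI : Finite S := hfin
  apply Finite.of_injective (fun f : A' →* G => (fun s : S => f s))
  intro f g h
  exact MonoidHom.eq_of_eqOn_dense hS fun s hs => congrFun h ⟨s, hs⟩

/-- Pairs `(ψ, x)` with `x` fixed by the image of `ψ`. -/
def ChiSpace := {p : (A' →* G) × X // ∀ a : A', p.1 a • p.2 = p.2}

variable {A' G X}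

/-- The conjugation-translation action of `G` on `ChiSpace`. -/
def chiSmul (g : G) (p : ChiSpace A' G X) : ChiSpace A' G X :=
  ⟨((MulAut.conj g).toMonoidHom.comp p.1.1, g • p.1.2), fun a => by
    have h := p.2 a
    simp [MulAut.conj_apply, mul_smul, h]⟩

instance : MulAction G (ChiSpace A' G X) where
  smul := chiSmul
  one_smul p := by
    have : chiSmul (1 : G) p = p := by
      apply Subtype.ext
      refine Prod.ext ?_ (one_smul G _)
      ext a; simp [chiSmul, MulAut.conj_apply]
    exact this
  mul_smul g h p := by
    have : chiSmul (g * h) p = chiSmul g (chiSmul h p) := by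
      apply Subtype.ext
      refine Prod.ext ?_ (mul_smul g h _)
      ext a; simp [chiSmul, MulAut.conj_apply, mul_assoc]
    exact this

lemma chiSmul_def (g : G) (p : ChiSpace A' G X) : g • p = chiSmul g p := rfl

/-- The hom `ℤ × A' → G` built from `g` and `ψ` with `g` centralizing the image of `ψ`. -/
def chiAux.mkHom (g : G) (ψ : A' →* G) (hc : ∀ a, g * ψ a = ψ a * g) :
    Multiplicative ℤ × A' →* G where
  toFun p := g ^ Multiplicative.toAdd p.1 * ψ p.2
  map_one' := by simp
  map_mul' p q := by
    have h1 : Commute g (ψ p.2) := hc p.2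
    have hcom : Commute (ψ p.2) (g ^ Multiplicative.toAdd q.1) := h1.symm.zpow_right _
    simp only [Prod.fst_mul, Prod.snd_mul, toAdd_mul, zpow_add, map_mul]
    rw [mul_assoc, mul_assoc, ← mul_assoc (g ^ Multiplicative.toAdd q.1), ← hcom.eq, mul_assoc]

lemma chiAux.pow_mk_eq (p : Multiplicative ℤ × A') :
    ((Multiplicative.ofAdd 1, (1 : A')) : Multiplicative ℤ × A') ^ Multiplicative.toAdd p.1 *
      ((1 : Multiplicative ℤ), p.2) = p := by
  refine Prod.ext ?_ ?_
  · rw [Prod.fst_mul, Prod.pow_fst]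
    show Multiplicative.ofAdd 1 ^ Multiplicative.toAdd p.1 * 1 = p.1
    rw [mul_one, ← ofAdd_zsmul, smul_eq_mul, mul_one, ofAdd_toAdd]
  · rw [Prod.snd_mul, Prod.pow_snd]
    show (1 : A') ^ Multiplicative.toAdd p.1 * p.2 = p.2
    rw [one_zpow, one_mul]

/-- The key bijection. -/
def chiAux.bigEquiv :
    {q : (Multiplicative ℤ × A' →* G) × X // ∀ p, q.1 p • q.2 = q.2} ≃
    {q : G × ChiSpace A' G X // q.1 • q.2 = q.2} where
  toFun q := ⟨(q.1.1 (Multiplicative.ofAdd 1, 1),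
      ⟨(q.1.1.comp (MonoidHom.inr (Multiplicative ℤ) A'), q.1.2), fun a => q.2 (1, a)⟩), by
    apply Subtype.ext
    refine Prod.ext ?_ (q.2 (Multiplicative.ofAdd 1, 1))
    ext a
    show q.1.1 (Multiplicative.ofAdd 1, 1) * q.1.1 (1, a) *
      (q.1.1 (Multiplicative.ofAdd 1, 1))⁻¹ = q.1.1 (1, a)
    rw [mul_inv_eq_iff_eq_mul, ← map_mul, ← map_mul]
    congr 1
    simp [Prod.mk_mul_mk]⟩
  invFun q := by
    refine ⟨(chiAux.mkHom q.1.1 q.1.2.1.1 ?_, q.1.2.1.2), ?_⟩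
    · intro a
      have h := congrArg (fun r : ChiSpace A' G X => r.1.1 a) q.2
      simp only [chiSmul_def, chiSmul, MonoidHom.coe_comp, Function.comp_apply,
        MulEquiv.coe_toMonoidHom, MulAut.conj_apply] at h
      rw [mul_inv_eq_iff_eq_mul] at h
      exact h
    · intro p
      have hg : q.1.1 • q.1.2.1.2 = q.1.2.1.2 :=
        congrArg (fun r : ChiSpace A' G X => r.1.2) q.2
      have hgn : q.1.1 ^ Multiplicative.toAdd p.1 • q.1.2.1.2 = q.1.2.1.2 :=
        Subgroup.zpow_mem (MulAction.stabilizer G q.1.2.1.2)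
          (MulAction.mem_stabilizer_iff.mpr hg) _
      show (q.1.1 ^ Multiplicative.toAdd p.1 * q.1.2.1.1 p.2) • q.1.2.1.2 = q.1.2.1.2
      rw [mul_smul, q.1.2.2 p.2, hgn]
  left_inv q := by
    apply Subtype.ext
    refine Prod.ext ?_ rfl
    ext p
    show q.1.1 (Multiplicative.ofAdd 1, 1) ^ Multiplicative.toAdd p.1 * q.1.1 (1, p.2) = q.1.1 p
    rw [← map_zpow, ← map_mul, chiAux.pow_mk_eq]
  right_inv q := by
    obtain ⟨⟨g, ⟨⟨ψ, x⟩, hx⟩⟩, hfix⟩ := q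
    apply Subtype.ext
    refine Prod.ext ?_ ?_
    · simp only [chiAux.mkHom, MonoidHom.coe_mk, OneHom.coe_mk, toAdd_ofAdd, zpow_one,
        map_one, mul_one]
    · apply Subtype.ext
      refine Prod.ext ?_ rfl
      ext a
      simp only [chiAux.mkHom, MonoidHom.coe_comp, Function.comp_apply, MonoidHom.coe_mk,
        OneHom.coe_mk, MonoidHom.inr_apply, toAdd_one, zpow_zero, one_mul]

end Aux

/-- If `A = ℤ × A'` with `A'` finitely generated, then for any finite group `G` and finite
`G`-set `X` the `A`-Euler characteristic `χ^{(A)}(X,G)` is an integer. -/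
theorem chiA_int_of_zsummand (A' G X : Type*) [Group A'] [Group.FG A'] [Group G] [Finite G]
    [MulAction G X] [Finite X] :
    ∃ m : ℤ, chiA (Multiplicative ℤ × A') G X = (m : ℚ) := by
  classical
  haveI hhom : Finite (A' →* G) := chiAux.finite_hom A' G
  haveI : Finite (ChiSpace A' G X) := Subtype.finite
  haveI hhomZ : Finite (Multiplicative ℤ × A' →* G) := by
    apply Finite.of_injective (fun φ : Multiplicative ℤ × A' →* G =>
      ((φ (Multiplicative.ofAdd 1, 1), φ.comp (MonoidHom.inr (Multiplicative ℤ) A')) :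
        G × (A' →* G)))
    intro f g h
    have h1 : f (Multiplicative.ofAdd 1, 1) = g (Multiplicative.ofAdd 1, 1) :=
      congrArg Prod.fst h
    have h2 : ∀ a, f (1, a) = g (1, a) := fun a =>
      DFunLike.congr_fun (congrArg Prod.snd h) a
    ext p
    have key : ∀ (φ : Multiplicative ℤ × A' →* G),
        φ p = φ (Multiplicative.ofAdd 1, 1) ^ Multiplicative.toAdd p.1 * φ (1, p.2) := by
      intro φ
      rw [← map_zpow, ← map_mul, chiAux.pow_mk_eq]
    rw [key f, key g, h1, h2]
  letI : Fintype (Multiplicative ℤ × A' →* G) := Fintype.ofFinite _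
  letI : Fintype G := Fintype.ofFinite G
  letI : Fintype (ChiSpace A' G X) := Fintype.ofFinite _
  letI : Fintype (Quotient (MulAction.orbitRel G (ChiSpace A' G X))) := Fintype.ofFinite _
  letI : ∀ g : G, Fintype (MulAction.fixedBy (ChiSpace A' G X) g) := fun g => Fintype.ofFinite _
  refine ⟨Fintype.card (Quotient (MulAction.orbitRel G (ChiSpace A' G X))), ?_⟩
  rw [chiA]
  have hsum : ∑ᶠ φ : Multiplicative ℤ × A' →* G,
      (Nat.card {x : X // ∀ a, φ a • x = x} : ℚ) =
      ((Fintype.card (Quotient (MulAction.orbitRel G (ChiSpace A' G X))) *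
        Fintype.card G : ℕ) : ℚ) := by
    rw [finsum_eq_sum_of_fintype,
      ← MulAction.sum_card_fixedBy_eq_card_orbits_mul_card_group G (ChiSpace A' G X)]
    norm_cast
    have e1 : Nat.card {q : (Multiplicative ℤ × A' →* G) × X // ∀ p, q.1 p • q.2 = q.2} =
        ∑ φ : Multiplicative ℤ × A' →* G, Nat.card {x : X // ∀ a, φ a • x = x} := by
      rw [Nat.card_congr (Equiv.subtypeProdEquivSigmaSubtype
        (fun (φ : Multiplicative ℤ × A' →* G) (x : X) => ∀ p, φ p • x = x))]
      letI : ∀ φ : Multiplicative ℤ × A' →* G, Fintype {x : X // ∀ p, φ p • x = x} :=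
        fun φ => Fintype.ofFinite _
      rw [Nat.card_eq_fintype_card, Fintype.card_sigma]
      exact Finset.sum_congr rfl fun φ _ => (Nat.card_eq_fintype_card).symm
    have e2 : Nat.card {q : G × ChiSpace A' G X // q.1 • q.2 = q.2} =
        ∑ g : G, Fintype.card (MulAction.fixedBy (ChiSpace A' G X) g) := by
      rw [Nat.card_congr (Equiv.subtypeProdEquivSigmaSubtype
        (fun (g : G) (s : ChiSpace A' G X) => g • s = s))]
      rw [Nat.card_eq_fintype_card, Fintype.card_sigma]
      refine Finset.sum_congr rfl fun g _ => ?_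
      have e3 : {b : ChiSpace A' G X // g • b = b} ≃ MulAction.fixedBy (ChiSpace A' G X) g :=
        Equiv.subtypeEquivRight fun s => Iff.rfl
      exact Nat.card_eq_fintype_card.symm.trans ((Nat.card_congr e3).trans Nat.card_eq_fintype_card)
    rw [← e1, ← e2, Nat.card_congr chiAux.bigEquiv]
  rw [hsum]
  have hG : (Nat.card G : ℚ) ≠ 0 := by
    simp [Nat.card_eq_fintype_card, Fintype.card_ne_zero]
  rw [Nat.card_eq_fintype_card]
  push_cast
  field_simp
end

section
/- For the group A = ℤ/2ℤ and G = ℤ/2ℤ, the coefficient of t² in ζ^{(A)}_{(pt,G)}(t) equals 3/4, i.e. |Hom(ℤ/2ℤ, ℤ/2ℤ ≀ S₂)| / |ℤ/2ℤ ≀ S₂| = 3/4; whereas for the trivial group, |Hom(ℤ/2ℤ, S₂)|/|S₂| = 1. Consequently the Tamanoi-type equation ζ^{(A)}_{(pt,G)}(t) = (ζ^{(A)}_{(pt,{e})}(t))^{χ^{(A)}(pt,G)} fails for A = ℤ/2ℤ, since χ^{(ℤ/2ℤ)}(pt, ℤ/2ℤ) = 1 but the coefficients of t² differ (3/4 ≠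 1). -/
open scoped BigOperators

/-- The wreath product `G ≀ S_n`, as pairs `((g₁,…,g_n), s)` with multiplication
`((g),s)((g'),s') = ((gᵢ g'_{s⁻¹(i)}), ss')`. -/
@[ext]
structure Wr (G : Type*) (n : ℕ) where
  g : Fin n → G
  s : Equiv.Perm (Fin n)

namespace Wr

variable {G : Type*} [Group G] {n : ℕ}

instance : Mul (Wr G n) :=
  ⟨fun p q => ⟨fun i => p.g i * q.g (p.s⁻¹ i), p.s * q.s⟩⟩

instance : One (Wr G n) := ⟨⟨1, 1⟩⟩

instance : Inv (Wr G n) := ⟨fun p => ⟨fun i => (p.g (p.s i))⁻¹, p.s⁻¹⟩⟩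

@[simp] lemma mul_g (p q : Wr G n) : (p * q).g = fun i => p.g i * q.g (p.s⁻¹ i) := rfl
@[simp] lemma mul_s (p q : Wr G n) : (p * q).s = p.s * q.s := rfl
@[simp] lemma one_g : (1 : Wr G n).g = 1 := rfl
@[simp] lemma one_s : (1 : Wr G n).s = 1 := rfl
@[simp] lemma inv_g (p : Wr G n) : p⁻¹.g = fun i => (p.g (p.s i))⁻¹ := rfl
@[simp] lemma inv_s (p : Wr G n) : p⁻¹.s = p.s⁻¹ := rfl

instance : Group (Wr G n) where
  mul_assoc p q t := by
    ext i
    · simp [mul_assoc, Equiv.Perm.mul_apply]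
    · simp [mul_assoc]
  one_mul p := by ext i <;> simp
  mul_one p := by ext i <;> simp
  inv_mul_cancel p := by
    ext i
    · simp
    · simp

variable {X : Type*} [MulAction G X]

/-- The action of `G ≀ S_n` on `X^n`:
`((g₁,…,g_n),s)·(x₁,…,x_n) = (g₁ x_{s⁻¹(1)},…,g_n x_{s⁻¹(n)})`. -/
instance : SMul (Wr G n) (Fin n → X) :=
  ⟨fun p x => fun i => p.g i • x (p.s⁻¹ i)⟩

@[simp] lemma smul_apply (p : Wr G n) (x : Fin n → X) (i : Fin n) :
    (p • x) i = p.g i • x (p.s⁻¹ i) := rfl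

instance : MulAction (Wr G n) (Fin n → X) where
  one_smul x := by funext i; simp
  mul_smul p q x := by
    funext i
    simp [mul_smul, Equiv.Perm.mul_apply]

end Wr


section Aux

variable {G : Type*} [Group G] {n : ℕ}

def wrEquiv : Wr G n ≃ (Fin n → G) × Equiv.Perm (Fin n) where
  toFun p := (p.g, p.s)
  invFun q := ⟨q.1, q.2⟩
  left_inv _ := rfl
  right_inv _ := rfl

instance [DecidableEq G] : DecidableEq (Wr G n) :=
  (wrEquiv (G := G) (n := n)).decidableEq

instance [Fintype G] [DecidableEq G] : Fintype (Wr G n) :=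
  Fintype.ofEquiv _ (wrEquiv (G := G) (n := n)).symm

def monoidHomEquivSubtype (M N : Type*) [Monoid M] [Monoid N] :
    (M →* N) ≃ {f : M → N // f 1 = 1 ∧ ∀ a b, f (a * b) = f a * f b} where
  toFun φ := ⟨φ, φ.map_one, φ.map_mul⟩
  invFun f := ⟨⟨f.1, f.2.1⟩, f.2.2⟩
  left_inv _ := rfl
  right_inv _ := rfl

instance (M N : Type*) [Monoid M] [Monoid N] [Fintype M] [DecidableEq M]
    [Fintype N] [DecidableEq N] : Fintype (M →* N) :=
  Fintype.ofEquiv _ (monoidHomEquivSubtype M N).symm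

lemma card_hom_punit : Nat.card (Multiplicative (ZMod 2) →* Wr PUnit.{u+1} 2) = 2 := by
  rw [Nat.card_eq_fintype_card]; decide

lemma card_wr_punit : Nat.card (Wr PUnit.{u+1} 2) = 2 := by
  rw [Nat.card_eq_fintype_card]; decide

end Aux

/-- Failure of the Tamanoi-type equation for `A = ℤ/2ℤ`: the coefficient of `t²` in
`ζ^{(A)}_{(pt,ℤ/2ℤ)}(t)` is `|Hom(ℤ/2ℤ, ℤ/2ℤ ≀ S₂)|/|ℤ/2ℤ ≀ S₂| = 3/4`, whereas for the
trivial group `|Hom(ℤ/2ℤ, S₂)|/|S₂| = 1`; moreover `χ^{(ℤ/2ℤ)}(pt, ℤ/2ℤ) = 1`,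
so `ζ^{(A)}_{(pt,ℤ/2ℤ)} ≠ (ζ^{(A)}_{(pt,{e})})^{χ^{(ℤ/2ℤ)}(pt,ℤ/2ℤ)} = ζ^{(A)}_{(pt,{e})}`
(for the one-point space, `ζ^{(A)}_{(pt,G)}(t) = Σ_n (|Hom(A, G ≀ S_n)|/|G ≀ S_n|) tⁿ`,
the trivial group being realized as `PUnit`, with `PUnit ≀ S₂ ≅ S₂`). -/
theorem tamanoi_fails_for_Z2 :
    ((Nat.card (Multiplicative (ZMod 2) →* Wr (Multiplicative (ZMod 2)) 2) : ℚ) /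
        (Nat.card (Wr (Multiplicative (ZMod 2)) 2) : ℚ) = 3 / 4) ∧
    ((Nat.card (Multiplicative (ZMod 2) →* Wr PUnit 2) : ℚ) /
        (Nat.card (Wr PUnit 2) : ℚ) = 1) ∧
    ((Nat.card (Multiplicative (ZMod 2) →* Multiplicative (ZMod 2)) : ℚ) /
        (Nat.card (Multiplicative (ZMod 2)) : ℚ) = 1) ∧
    (PowerSeries.mk fun n =>
        (Nat.card (Multiplicative (ZMod 2) →* Wr (Multiplicative (ZMod 2)) n) : ℚ) /
          (Nat.card (Wr (Multiplicative (ZMod 2)) n) : ℚ)) ≠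
      (PowerSeries.mk fun n =>
        (Nat.card (Multiplicative (ZMod 2) →* Wr PUnit n) : ℚ) /
          (Nat.card (Wr PUnit n) : ℚ)) := by
  have h1 : Nat.card (Multiplicative (ZMod 2) →* Wr (Multiplicative (ZMod 2)) 2) = 6 := by
    rw [Nat.card_eq_fintype_card]; decide
  have h2 : Nat.card (Wr (Multiplicative (ZMod 2)) 2) = 8 := by
    rw [Nat.card_eq_fintype_card]; decide
  have h5 : Nat.card (Multiplicative (ZMod 2) →* Multiplicative (ZMod 2)) = 2 := by
    rw [Nat.card_eq_fintype_card]; decide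
  have h6 : Nat.card (Multiplicative (ZMod 2)) = 2 := by
    rw [Nat.card_eq_fintype_card]; decide
  refine ⟨by rw [h1, h2]; norm_num, by rw [card_hom_punit, card_wr_punit]; norm_num,
    by rw [h5, h6]; norm_num, ?_⟩
  intro h
  have := congrArg (PowerSeries.coeff 2) h
  rw [PowerSeries.coeff_mk, PowerSeries.coeff_mk, h1, h2, card_hom_punit, card_wr_punit] at this
  norm_num at this
end
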